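/- Let g^{ij}(u) be a smooth nondegenerate contravariant metric of zero curvature with Levi-Civita Christoffel symbols Γ^i_{jk}, and set Γ^{ij}_k := −g^{is}Γ^j_{sk}. Then for reduced 1-forms α = (α_i), β = (β_j) ∈ 𝒜ⁿ, the bracket {α,β} := Lie_{Pβ}α − Lie_{Pα}β + δ⟨β, Pα⟩ is, as a 1-form on the formal loop space, the reduced 1-form with components {α,β}_i = Σ_{k,l,s} ∂_x^s( g^{kl}∂_xβ_l + Γ^{kl}_m u^m_x β_l )(∂α_i/∂u^k_{(s)}) − Σ_{k,l,s} ∂_x^s( g^{kl}∂_xα_l + Γ^{kl}_m u^m_x α_l )(∂β_i/∂u^k_{(s)}) + Σ_{k,l} ( α_k ∂_x β_l − β_k ∂_x α_l ) Γ^{lk}_i − Σ_{k,l,s,m} α_k β_l [ Γ^k_{is} Γ^{sl}_m − Γ^l_{is} Γ^{sk}_m ] u^m_x. -/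

import Mathlib

open Finset

/-- An abstract model of the ring `𝒜` of differential polynomials in the formal
variables `u^i_{(s)}` (`i = 1,…,n`, `s ≥ 0`, `u^i_{(0)} = u^i`): a commutative
`ℝ`-algebra `A` equipped with the variables `u (i,s)`, the partial derivatives
`pd (i,s) = ∂/∂u^i_{(s)}` (commuting `ℝ`-linear derivations with
`∂u^j_{(t)}/∂u^i_{(s)} = δ`), a finiteness witness `supp f` (each `f` depends on
finitely many of the variables), and the total `x`-derivative
`∂_x f = Σ_{i,s} u^i_{(s+1)} ∂f/∂u^i_{(s)}` (a finite sum on each `f`). -/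
structure DiffPolyAlg (n : ℕ) (A : Type*) [CommRing A] [Algebra ℝ A] where
  u : Fin n × ℕ → A
  pd : Fin n × ℕ → A → A
  pd_add : ∀ v f g, pd v (f + g) = pd v f + pd v g
  pd_smul : ∀ v (r : ℝ) f, pd v (r • f) = r • pd v f
  pd_mul : ∀ v f g, pd v (f * g) = pd v f * g + f * pd v g
  pd_u : ∀ v w, pd v (u w) = if v = w then 1 else 0
  pd_comm : ∀ v w f, pd v (pd w f) = pd w (pd v f)
  supp : A → Finset (Fin n × ℕ)
  pd_eq_zero : ∀ f v, v ∉ supp f → pd v f = 0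
  Dx : A → A
  Dx_add : ∀ f g, Dx (f + g) = Dx f + Dx g
  Dx_smul : ∀ (r : ℝ) f, Dx (r • f) = r • Dx f
  Dx_mul : ∀ f g, Dx (f * g) = Dx f * g + f * Dx g
  Dx_spec : ∀ f, ∀ S : Finset (Fin n × ℕ), supp f ⊆ S →
      Dx f = ∑ v ∈ S, u (v.1, v.2 + 1) * pd v f

namespace DiffPolyAlg

variable {n : ℕ} {A : Type*} [CommRing A] [Algebra ℝ A]

/-- The finite set of orders `s` such that `∂f/∂u^i_{(s)}` can be nonzero;
sums `Σ_s` below are taken over this set. -/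
def sset (D : DiffPolyAlg n A) (f : A) (i : Fin n) : Finset ℕ :=
  ((D.supp f).filter fun v => v.1 = i).image Prod.snd

/-- The components `{α,β}_i = Σ_{k,l,s} η^{kl} [ (∂_x^{s+1}β_l)(∂α_i/∂u^k_{(s)})
− (∂_x^{s+1}α_l)(∂β_i/∂u^k_{(s)}) ]` of the Poisson bracket of two reduced
1-forms in flat coordinates (the sum over the pairs `(k,s)` is restricted to the
finite set where the partial derivatives can be nonzero). -/
def pbracket (D : DiffPolyAlg n A) (η : Fin n → Fin n → ℝ)
    (α β : Fin n → A) : Fin n → A := fun i =>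
  (∑ v ∈ D.supp (α i), ∑ l, η v.1 l • (D.Dx^[v.2 + 1] (β l) * D.pd v (α i)))
    - ∑ v ∈ D.supp (β i), ∑ l, η v.1 l • (D.Dx^[v.2 + 1] (α l) * D.pd v (β i))

end DiffPolyAlg

namespace DiffPolyAlg

variable {n : ℕ} {A : Type*} [CommRing A] [Algebra ℝ A]

/-- The contravariant Christoffel symbols `Γ^{ij}_k := −g^{is} Γ^j_{sk}`. -/
def contraGamma (g : Fin n → Fin n → A) (Γ : Fin n → Fin n → Fin n → A) :
    Fin n → Fin n → Fin n → A := fun i j k => -(∑ s, g i s * Γ j s k)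

/-- The hydrodynamic Poisson structure applied to a reduced 1-form:
`(Pβ)^i = g^{il} ∂_x β_l + Γ^{il}_k u^k_x β_l`. -/
def hydroP (D : DiffPolyAlg n A) (g : Fin n → Fin n → A)
    (Γ : Fin n → Fin n → Fin n → A) (β : Fin n → A) : Fin n → A := fun i =>
  (∑ l, g i l * D.Dx (β l))
    + ∑ l, ∑ k, contraGamma g Γ i l k * (D.u (k, 1) * β l)

/-- The coefficient of `δu^i_{(t)}` in the (non-reduced) 1-form
`Lie_{Pβ}α − Lie_{Pα}β + δ⟨β, Pα⟩` for the hydrodynamic Poisson structure. -/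
def rawBracketCompG (D : DiffPolyAlg n A) (g : Fin n → Fin n → A)
    (Γ : Fin n → Fin n → Fin n → A) (α β : Fin n → A) : Fin n → ℕ → A :=
  fun i t =>
    (if t = 0 then
        (∑ v ∈ D.supp (α i), D.Dx^[v.2] (hydroP D g Γ β v.1) * D.pd v (α i))
          - ∑ v ∈ D.supp (β i), D.Dx^[v.2] (hydroP D g Γ α v.1) * D.pd v (β i)
      else 0)
      + (∑ k, α k * D.pd (i, t) (hydroP D g Γ β k))
      - (∑ k, β k * D.pd (i, t) (hydroP D g Γ α k))
      + D.pd (i, t) (∑ l, β l * hydroP D g Γ α l)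

/-- A finite set of orders `t` containing all those for which the coefficient of
`δu^i_{(t)}` in `Lie_{Pβ}α − Lie_{Pα}β + δ⟨β, Pα⟩` can be nonzero. -/
def rawBracketOrdersG (D : DiffPolyAlg n A) (g : Fin n → Fin n → A)
    (Γ : Fin n → Fin n → Fin n → A) (α β : Fin n → A) (i : Fin n) : Finset ℕ :=
  insert 0
    ((Finset.univ.biUnion fun k =>
        D.sset (hydroP D g Γ β k) i ∪ D.sset (hydroP D g Γ α k) i)
      ∪ D.sset (∑ l, β l * hydroP D g Γ α l) i)

/-- The reduced components `R_i = Σ_t (−1)^t ∂_x^t (coefficient of δu^i_{(t)})`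
of the 1-form `{α,β} = Lie_{Pβ}α − Lie_{Pα}β + δ⟨β, Pα⟩`; two 1-forms are equal
modulo the image of `d` precisely when their reduced components coincide. -/
def reducedRawBracketG (D : DiffPolyAlg n A) (g : Fin n → Fin n → A)
    (Γ : Fin n → Fin n → Fin n → A) (α β : Fin n → A) : Fin n → A := fun i =>
  ∑ t ∈ rawBracketOrdersG D g Γ α β i,
    ((-1 : ℝ) ^ t) • D.Dx^[t] (rawBracketCompG D g Γ α β i t)

end DiffPolyAlg

/-!
Let `l^*` be the adjoint of the Fréchet derivative (`frechetAdj`). Reducing the bracket leaves its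
`t = 0` terms plus `Σ_k l^*_{(Pβ)_k}(α_k) + Σ_l l^*_{β_l}((Pα)_l)`. Write `P = g ∂_x + b` with
`b^{kl} = Γ^{kl}_m u^m_x`, expand by the Leibniz rule and move `∂_x` across via
`l^*_{∂_x f}(w) = -l^*_f(∂_x w)`. All pairings against `β` then carry the coefficient
`α_k (b^{kl} + b^{lk} - ∂_x g^{kl})`, which vanishes because `∂_m g^{kl} = Γ^{kl}_m + Γ^{lk}_m`:
this is the skew-adjointness of `P`. What is left involves only `∂g^{kl}/∂u^i` and the derivatives
of `b^{kl}` in `u^i` and `u^i_x`, and the zero-curvature condition turns the antisymmetrised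
derivative `∂_i Γ^{kl}_m - ∂_m Γ^{kl}_i` that appears there into the quadratic Christoffel terms.
-/

section MatrixDerivation

variable {ι R B : Type*} [Fintype ι] [CommSemiring R] [CommRing B] [Algebra R B]

lemma Matrix.map_derivation_mul (d : Derivation R B B) (G L : Matrix ι ι B) :
    (G * L).map d = G.map d * L + G * L.map d := by
  ext i j
  simp only [Matrix.map_apply, Matrix.mul_apply, Matrix.add_apply, map_sum, Derivation.leibniz,
    smul_eq_mul, sum_add_distrib, mul_comm (d _)]
  rw [add_comm]

lemma Matrix.map_derivation_eq_of_mul_eq_one [DecidableEq ι] (d : Derivation R B B)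
    {G L : Matrix ι ι B} (hGL : G * L = 1) : G.map d = -(G * L.map d * G) := by
  have hLG : L * G = 1 := mul_eq_one_comm.mp hGL
  have hone : (1 : Matrix ι ι B).map d = 0 := by
    ext i j
    by_cases h : i = j <;> simp [h]
  have hsum : G.map d * L + G * L.map d = 0 := by
    rw [← Matrix.map_derivation_mul, hGL, hone]
  calc G.map d = (G.map d * L) * G := by rw [Matrix.mul_assoc, hLG, Matrix.mul_one]
    _ = -(G * L.map d * G) := by rw [eq_neg_of_add_eq_zero_left hsum, Matrix.neg_mul]

lemma sum_mul_sum_eq_of_mul_eq_one [DecidableEq ι] {g gl : ι → ι → B}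
    (h : Matrix.of gl * Matrix.of g = 1) (c : ι → B) (i : ι) :
    ∑ a, gl i a * ∑ s, g a s * c s = c i := by
  have hc := congrFun (Matrix.mulVec_mulVec c (Matrix.of gl) (Matrix.of g)) i
  rwa [h, Matrix.one_mulVec] at hc

end MatrixDerivation

namespace DiffPolyAlg

section

variable {n : ℕ} {A : Type*} [CommRing A] [Algebra ℝ A] (D : DiffPolyAlg n A)

def pdDerivation (v : Fin n × ℕ) : Derivation ℝ A A :=
  Derivation.mk' ⟨⟨D.pd v, D.pd_add v⟩, D.pd_smul v⟩ fun f g => by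
    simp only [LinearMap.coe_mk, AddHom.coe_mk, D.pd_mul, smul_eq_mul]
    ring

def DxDerivation : Derivation ℝ A A :=
  Derivation.mk' ⟨⟨D.Dx, D.Dx_add⟩, D.Dx_smul⟩ fun f g => by
    simp only [LinearMap.coe_mk, AddHom.coe_mk, D.Dx_mul, smul_eq_mul]
    ring

@[simp]
lemma coe_pdDerivation (v : Fin n × ℕ) : ⇑(D.pdDerivation v) = D.pd v := rfl

lemma pd_neg (v : Fin n × ℕ) (f : A) : D.pd v (-f) = -D.pd v f :=
  map_neg (D.pdDerivation v) f

lemma pd_sum {ι : Type*} (v : Fin n × ℕ) (s : Finset ι) (f : ι → A) :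
    D.pd v (∑ x ∈ s, f x) = ∑ x ∈ s, D.pd v (f x) :=
  map_sum (D.pdDerivation v) f s

lemma Dx_zero : D.Dx 0 = 0 := map_zero D.DxDerivation

lemma Dx_iterate_zero (t : ℕ) : D.Dx^[t] 0 = 0 :=
  iterate_map_zero D.DxDerivation t

lemma Dx_iterate_add (t : ℕ) (f g : A) : D.Dx^[t] (f + g) = D.Dx^[t] f + D.Dx^[t] g :=
  iterate_map_add D.DxDerivation t f g

lemma Dx_iterate_sum {ι : Type*} (t : ℕ) (s : Finset ι) (f : ι → A) :
    D.Dx^[t] (∑ x ∈ s, f x) = ∑ x ∈ s, D.Dx^[t] (f x) := by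
  have h := map_sum ((D.DxDerivation : A →ₗ[ℝ] A) ^ t) f s
  simp only [Module.End.pow_apply] at h
  exact h

lemma Dx_eq_sum_of_pd_eq_zero {f : A} {S : Finset (Fin n × ℕ)}
    (hS : ∀ v ∉ S, D.pd v f = 0) : D.Dx f = ∑ v ∈ S, D.u (v.1, v.2 + 1) * D.pd v f := by
  rw [D.Dx_spec f (D.supp f ∪ S) subset_union_left]
  exact (sum_subset subset_union_right fun v _ hv => by rw [hS v hv, mul_zero]).symm

lemma pd_Dx (w : Fin n × ℕ) (f : A) :
    D.pd w (D.Dx f) =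
      D.Dx (D.pd w f) + ∑ v ∈ D.supp f, if w = (v.1, v.2 + 1) then D.pd v f else 0 := by
  let S := D.supp f ∪ D.supp (D.pd w f)
  rw [D.Dx_spec f S subset_union_left, D.Dx_spec (D.pd w f) S subset_union_right, D.pd_sum]
  simp only [D.pd_mul, D.pd_u, D.pd_comm w, sum_add_distrib, ite_mul, one_mul, zero_mul]
  rw [add_comm]
  congr 1
  exact (sum_subset subset_union_left fun v _ hv => by rw [D.pd_eq_zero f v hv, ite_self]).symm

lemma pd_zero_Dx (i : Fin n) (f : A) : D.pd (i, 0) (D.Dx f) = D.Dx (D.pd (i, 0) f) := by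
  rw [D.pd_Dx, sum_eq_zero fun v _ => if_neg (by simp [Prod.ext_iff]), add_zero]

lemma pd_succ_Dx (i : Fin n) (t : ℕ) (f : A) :
    D.pd (i, t + 1) (D.Dx f) = D.Dx (D.pd (i, t + 1) f) + D.pd (i, t) f := by
  have hcond : ∀ v : Fin n × ℕ, (i, t + 1) = (v.1, v.2 + 1) ↔ (i, t) = v := by
    simp [Prod.ext_iff, eq_comm]
  simp only [D.pd_Dx, hcond, sum_ite_eq]
  split_ifs with h
  · rfl
  · rw [D.pd_eq_zero f _ h]

def IsOrderZero (f : A) : Prop := ∀ v : Fin n × ℕ, 1 ≤ v.2 → D.pd v f = 0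

def OrderLT (f : A) (i : Fin n) (N : ℕ) : Prop := ∀ t, N ≤ t → D.pd (i, t) f = 0

lemma exists_orderLT {ι : Type*} [Fintype ι] (f : ι → A) (i : Fin n) :
    ∃ N, ∀ l, D.OrderLT (f l) i N := by
  refine ⟨(univ.sup fun l => (D.supp (f l)).sup Prod.snd) + 1, fun l t ht => ?_⟩
  refine D.pd_eq_zero _ _ fun hmem => ?_
  have h₁ := le_sup (f := Prod.snd) hmem
  have h₂ := le_sup (f := fun l => (D.supp (f l)).sup Prod.snd) (mem_univ l)
  simp only at h₁ h₂
  omega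

lemma Dx_of_isOrderZero {f : A} (hf : D.IsOrderZero f) :
    D.Dx f = ∑ m, D.u (m, 1) * D.pd (m, 0) f := by
  rw [D.Dx_eq_sum_of_pd_eq_zero (S := univ ×ˢ {0}) fun v hv =>
    hf v (Nat.one_le_iff_ne_zero.2 fun h => hv (mem_product.2 ⟨mem_univ _, mem_singleton.2 h⟩)),
    sum_product]
  simp

def IsMetricCompatible (gl : Fin n → Fin n → A) (Γ : Fin n → Fin n → Fin n → A) : Prop :=
  ∀ k i j, D.pd (k, 0) (gl i j) = ∑ l, (gl l j * Γ l i k + gl i l * Γ l j k)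

def IsFlat (g : Fin n → Fin n → A) (Γ : Fin n → Fin n → Fin n → A) : Prop :=
  ∀ i j k l,
    (∑ s, g i s * (D.pd (s, 0) (contraGamma g Γ j k l) - D.pd (l, 0) (contraGamma g Γ j k s)))
      - (∑ s, contraGamma g Γ i j s * contraGamma g Γ s k l)
      + (∑ s, contraGamma g Γ i k s * contraGamma g Γ s j l) = 0

/-- `(l_f^* w)_i = Σ_t (-∂_x)^t (w ∂f/∂u^i_{(t)})`, the adjoint of the Fréchet derivative of
`f` applied to `w`. The sum is cut off at `t < N`, so it is the true adjoint only once `f` has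
order `< N` in `u^i`. -/
def frechetAdj (i : Fin n) (w f : A) (N : ℕ) : A :=
  ∑ t ∈ range N, ((-1 : ℝ) ^ t) • D.Dx^[t] (w * D.pd (i, t) f)

def firstOrderOp (a b : Fin n → Fin n → A) (β : Fin n → A) : Fin n → A :=
  fun k => ∑ l, (a k l * D.Dx (β l) + b k l * β l)

def contraGammaUx (g : Fin n → Fin n → A) (Γ : Fin n → Fin n → Fin n → A) :
    Fin n → Fin n → A :=
  fun k l => ∑ m, contraGamma g Γ k l m * D.u (m, 1)

end

variable {n : ℕ} {A : Type*} [CommRing A] [Algebra ℝ A] {D : DiffPolyAlg n A}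
  {g gl : Fin n → Fin n → A} {Γ : Fin n → Fin n → Fin n → A}

lemma OrderLT.mono {f : A} {i : Fin n} {N M : ℕ} (h : D.OrderLT f i N) (hNM : N ≤ M) :
    D.OrderLT f i M := fun t ht => h t (hNM.trans ht)

lemma isOrderZero_contraGamma (hg : ∀ i j, D.IsOrderZero (g i j))
    (hΓ : ∀ i j k, D.IsOrderZero (Γ i j k)) (i j k : Fin n) :
    D.IsOrderZero (contraGamma g Γ i j k) := fun v hv => by
  simp [contraGamma, D.pd_neg, D.pd_sum, D.pd_mul, hg _ _ v hv, hΓ _ _ _ v hv]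

lemma frechetAdj_zero_left (i : Fin n) (f : A) (N : ℕ) : D.frechetAdj i 0 f N = 0 := by
  simp [frechetAdj, D.Dx_iterate_zero]

lemma frechetAdj_add_left (i : Fin n) (w w' f : A) (N : ℕ) :
    D.frechetAdj i (w + w') f N = D.frechetAdj i w f N + D.frechetAdj i w' f N := by
  simp only [frechetAdj, add_mul, D.Dx_iterate_add, smul_add, sum_add_distrib]

lemma frechetAdj_neg_left (i : Fin n) (w f : A) (N : ℕ) :
    D.frechetAdj i (-w) f N = -D.frechetAdj i w f N :=
  eq_neg_of_add_eq_zero_left (by rw [← frechetAdj_add_left, neg_add_cancel, frechetAdj_zero_left])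

lemma frechetAdj_sum_left {ι : Type*} (i : Fin n) (s : Finset ι) (w : ι → A) (f : A)
    (N : ℕ) : D.frechetAdj i (∑ x ∈ s, w x) f N = ∑ x ∈ s, D.frechetAdj i (w x) f N := by
  simp only [frechetAdj, sum_mul, D.Dx_iterate_sum, smul_sum]
  exact sum_comm

lemma frechetAdj_add_right (i : Fin n) (w f f' : A) (N : ℕ) :
    D.frechetAdj i w (f + f') N = D.frechetAdj i w f N + D.frechetAdj i w f' N := by
  simp only [frechetAdj, D.pd_add, mul_add, D.Dx_iterate_add, smul_add, sum_add_distrib]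

lemma frechetAdj_sum_right {ι : Type*} (i : Fin n) (s : Finset ι) (w : A) (f : ι → A)
    (N : ℕ) : D.frechetAdj i w (∑ x ∈ s, f x) N = ∑ x ∈ s, D.frechetAdj i w (f x) N := by
  simp only [frechetAdj, D.pd_sum, mul_sum, D.Dx_iterate_sum, smul_sum]
  exact sum_comm

lemma frechetAdj_mul_right (i : Fin n) (w f f' : A) (N : ℕ) :
    D.frechetAdj i w (f * f') N = D.frechetAdj i (w * f') f N + D.frechetAdj i (w * f) f' N := by
  simp only [frechetAdj, ← sum_add_distrib, ← smul_add, ← D.Dx_iterate_add, D.pd_mul]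
  refine sum_congr rfl fun t _ => ?_
  congr 2
  ring

lemma frechetAdj_of_isOrderZero (i : Fin n) (w : A) {f : A} (hf : D.IsOrderZero f) {N : ℕ}
    (hN : 1 ≤ N) : D.frechetAdj i w f N = w * D.pd (i, 0) f := by
  rw [frechetAdj, sum_eq_single_of_mem 0 (mem_range.2 hN) fun t _ ht => by
    rw [hf (i, t) (Nat.one_le_iff_ne_zero.2 ht), mul_zero, D.Dx_iterate_zero, smul_zero]]
  simp

lemma frechetAdj_u_one (i m : Fin n) (w : A) {N : ℕ} (hN : 2 ≤ N) :
    D.frechetAdj i w (D.u (m, 1)) N = if m = i then -D.Dx w else 0 := by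
  rw [frechetAdj, sum_eq_single_of_mem 1 (mem_range.2 hN) fun t _ ht => by
    rw [D.pd_u, if_neg (by simp [Prod.ext_iff, ht]), mul_zero, D.Dx_iterate_zero,
      smul_zero]]
  by_cases h : m = i
  · simp [h, D.pd_u]
  · simp [D.pd_u, Prod.ext_iff, h, Ne.symm h, D.Dx_zero]

lemma frechetAdj_Dx_right (i : Fin n) (w : A) {f : A} {N : ℕ} (hf : D.OrderLT f i N) :
    D.frechetAdj i w (D.Dx f) (N + 1) = -D.frechetAdj i (D.Dx w) f (N + 1) := by
  rw [eq_neg_iff_add_eq_zero, frechetAdj, frechetAdj, ← sum_add_distrib]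
  -- the `t`-th summand is `G t - G (t - 1)`, so the sum telescopes to `G N = 0`
  set G : ℕ → A := fun t => ((-1 : ℝ) ^ t) • D.Dx^[t + 1] (w * D.pd (i, t) f) with hG
  have hzero : ((-1 : ℝ) ^ 0) • D.Dx^[0] (w * D.pd (i, 0) (D.Dx f))
      + ((-1 : ℝ) ^ 0) • D.Dx^[0] (D.Dx w * D.pd (i, 0) f) = G 0 := by
    simp only [hG, pow_zero, one_smul, Function.iterate_zero, id, zero_add,
      Function.iterate_one, D.pd_zero_Dx, D.Dx_mul]
    ring
  have hsucc : ∀ s : ℕ, ((-1 : ℝ) ^ (s + 1)) • D.Dx^[s + 1] (w * D.pd (i, s + 1) (D.Dx f))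
      + ((-1 : ℝ) ^ (s + 1)) • D.Dx^[s + 1] (D.Dx w * D.pd (i, s + 1) f) = G (s + 1) - G s := by
    intro s
    have hLeibniz : w * D.pd (i, s + 1) (D.Dx f) + D.Dx w * D.pd (i, s + 1) f
        = D.Dx (w * D.pd (i, s + 1) f) + w * D.pd (i, s) f := by
      rw [D.pd_succ_Dx, D.Dx_mul]
      ring
    rw [← smul_add, ← D.Dx_iterate_add, hLeibniz, D.Dx_iterate_add,
      ← Function.iterate_succ_apply, smul_add]
    simp only [hG, Nat.succ_eq_add_one, pow_succ, mul_neg_one, neg_smul]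
    abel
  rw [sum_range_succ', sum_congr rfl fun s _ => hsucc s, sum_range_sub, hzero]
  simp [hG, hf N le_rfl, D.Dx_zero, D.Dx_iterate_zero]

lemma frechetAdj_sum_mul_u_one (i : Fin n) (w : A) {c : Fin n → A}
    (hc : ∀ m, D.IsOrderZero (c m)) {N : ℕ} (hN : 2 ≤ N) :
    D.frechetAdj i w (∑ m, c m * D.u (m, 1)) N
      = w * ∑ m, (D.pd (i, 0) (c m) - D.pd (m, 0) (c i)) * D.u (m, 1) - c i * D.Dx w := by
  simp only [frechetAdj_sum_right, frechetAdj_mul_right,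
    frechetAdj_of_isOrderZero _ _ (hc _) (one_le_two.trans hN), frechetAdj_u_one _ _ _ hN,
    sum_add_distrib, Fintype.sum_ite_eq']
  rw [D.Dx_mul, D.Dx_of_isOrderZero (hc i)]
  simp only [mul_sum, sub_mul, mul_sub, sum_sub_distrib, mul_assoc, mul_comm (D.pd _ _) (D.u _)]
  ring

lemma sum_frechetAdj_firstOrderOp_of_skew {a b : Fin n → Fin n → A}
    (ha : ∀ k l, a k l = a l k) (hab : ∀ k l, D.Dx (a k l) = b k l + b l k)
    (i : Fin n) (α β : Fin n → A) {N : ℕ} (hβ : ∀ l, D.OrderLT (β l) i N) :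
    ∑ k, D.frechetAdj i (α k) (D.firstOrderOp a b β k) (N + 1)
      + ∑ l, D.frechetAdj i (D.firstOrderOp a b α l) (β l) (N + 1)
    = ∑ k, ∑ l, (D.frechetAdj i (α k * D.Dx (β l)) (a k l) (N + 1)
        + D.frechetAdj i (α k * β l) (b k l) (N + 1)) := by
  have hexpand : ∀ k l, D.frechetAdj i (α k) (a k l * D.Dx (β l) + b k l * β l) (N + 1)
      = (D.frechetAdj i (α k * D.Dx (β l)) (a k l) (N + 1)
          + D.frechetAdj i (α k * β l) (b k l) (N + 1))
        + D.frechetAdj i (-D.Dx (α k * a k l) + α k * b k l) (β l) (N + 1) := by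
    intro k l
    rw [frechetAdj_add_right, frechetAdj_mul_right, frechetAdj_mul_right,
      frechetAdj_Dx_right _ _ (hβ l), frechetAdj_add_left, frechetAdj_neg_left]
    ring
  -- skew-adjointness: the coefficients of the remaining pairings with `β l` cancel
  have hcancel : ∀ k l,
      -D.Dx (α k * a k l) + α k * b k l + (a l k * D.Dx (α k) + b l k * α k) = 0 := by
    intro k l
    rw [D.Dx_mul, hab, ha l k]
    ring
  simp only [firstOrderOp, frechetAdj_sum_right, frechetAdj_sum_left]
  simp only [hexpand, sum_add_distrib]
  rw [add_assoc, add_eq_left, sum_comm, ← sum_add_distrib]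
  refine sum_eq_zero fun l _ => ?_
  rw [← sum_add_distrib]
  simp only [← frechetAdj_add_left, hcancel, frechetAdj_zero_left, sum_const_zero]

lemma pd_metric_eq_contraGamma (hg_symm : ∀ i j, g i j = g j i)
    (hG : Matrix.of g * Matrix.of gl = 1)
    (hΓ_metric : D.IsMetricCompatible gl Γ)
    (k i m : Fin n) : D.pd (k, 0) (g i m) = contraGamma g Γ i m k + contraGamma g Γ m i k := by
  set M : Matrix (Fin n) (Fin n) A := Matrix.of fun l j => Γ l j k
  have hLG : Matrix.of gl * Matrix.of g = 1 := mul_eq_one_comm.mp hG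
  have hgl : (Matrix.of gl).map (D.pdDerivation (k, 0))
      = M.transpose * Matrix.of gl + Matrix.of gl * M := by
    ext s j
    simp [M, Matrix.mul_apply, hΓ_metric k s j, sum_add_distrib, mul_comm]
  have hg : (Matrix.of g).map (D.pdDerivation (k, 0))
      = -(Matrix.of g * M.transpose) - M * Matrix.of g := by
    rw [Matrix.map_derivation_eq_of_mul_eq_one _ hG, hgl]
    calc _ = -((Matrix.of g * M.transpose) * (Matrix.of gl * Matrix.of g))
          - (Matrix.of g * Matrix.of gl) * (M * Matrix.of g) := by noncomm_ring
      _ = _ := by rw [hLG, hG, Matrix.mul_one, Matrix.one_mul]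
  have him := congrFun (congrFun hg i) m
  simp only [Matrix.map_apply, Matrix.of_apply, coe_pdDerivation, Matrix.sub_apply,
    Matrix.neg_apply, Matrix.mul_apply, Matrix.transpose_apply, M] at him
  rw [him, contraGamma, contraGamma]
  simp only [hg_symm m, mul_comm (g _ _)]
  ring

lemma pd_contraGamma_sub_pd_contraGamma (hLG : Matrix.of gl * Matrix.of g = 1)
    (hflat : D.IsFlat g Γ)
    (i k l m : Fin n) :
    D.pd (i, 0) (contraGamma g Γ k l m) - D.pd (m, 0) (contraGamma g Γ k l i)
      = -∑ s, (Γ k i s * contraGamma g Γ s l m - Γ l i s * contraGamma g Γ s k m) := by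
  have hcontract : ∀ j s, ∑ a, gl i a * contraGamma g Γ a j s = -Γ j i s := fun j s => by
    simp only [contraGamma, mul_neg, sum_neg_distrib,
      sum_mul_sum_eq_of_mul_eq_one hLG (fun b => Γ j b s)]
  have hswap : ∀ j p, ∑ a, gl i a * ∑ s, contraGamma g Γ a j s * contraGamma g Γ s p m
      = ∑ s, (∑ a, gl i a * contraGamma g Γ a j s) * contraGamma g Γ s p m := fun j p =>
    Matrix.dotProduct_mulVec (fun a => gl i a) (Matrix.of fun a s => contraGamma g Γ a j s)
      (fun s => contraGamma g Γ s p m)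
  calc D.pd (i, 0) (contraGamma g Γ k l m) - D.pd (m, 0) (contraGamma g Γ k l i)
      = ∑ a, gl i a * ∑ s, g a s * (D.pd (s, 0) (contraGamma g Γ k l m)
          - D.pd (m, 0) (contraGamma g Γ k l s)) :=
        (sum_mul_sum_eq_of_mul_eq_one hLG (fun s => D.pd (s, 0) (contraGamma g Γ k l m)
          - D.pd (m, 0) (contraGamma g Γ k l s)) i).symm
    _ = ∑ a, gl i a * ((∑ s, contraGamma g Γ a k s * contraGamma g Γ s l m)
          - ∑ s, contraGamma g Γ a l s * contraGamma g Γ s k m) :=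
        sum_congr rfl fun a _ => by
          congr 1
          linear_combination hflat a k l m
    _ = _ := by
        simp only [mul_sub, sum_sub_distrib, hswap, hcontract, neg_mul, sum_neg_distrib]
        ring

lemma pd_eq_zero_of_notMem_sset {f : A} {i : Fin n} {t : ℕ} (h : t ∉ D.sset f i) :
    D.pd (i, t) f = 0 :=
  D.pd_eq_zero f _ fun hmem => h (mem_image.2 ⟨(i, t), mem_filter.2 ⟨hmem, rfl⟩, rfl⟩)

lemma rawBracketCompG_eq (α β : Fin n → A) (i : Fin n) (t : ℕ) :
    rawBracketCompG D g Γ α β i t =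
      (if t = 0 then
          (∑ v ∈ D.supp (α i), D.Dx^[v.2] (hydroP D g Γ β v.1) * D.pd v (α i))
            - ∑ v ∈ D.supp (β i), D.Dx^[v.2] (hydroP D g Γ α v.1) * D.pd v (β i)
        else 0)
        + (∑ k, α k * D.pd (i, t) (hydroP D g Γ β k)
          + ∑ l, hydroP D g Γ α l * D.pd (i, t) (β l)) := by
  simp only [rawBracketCompG, D.pd_sum, D.pd_mul, sum_add_distrib, mul_comm (D.pd _ (β _))]
  ring

lemma rawBracketCompG_eq_zero {α β : Fin n → A} {i : Fin n} {t : ℕ}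
    (ht : t ∉ rawBracketOrdersG D g Γ α β i) : rawBracketCompG D g Γ α β i t = 0 := by
  simp only [rawBracketOrdersG, mem_insert, mem_union, mem_biUnion, mem_univ, true_and,
    not_or, not_exists] at ht
  obtain ⟨ht0, hPβα, hpair⟩ := ht
  simp only [rawBracketCompG, if_neg ht0, pd_eq_zero_of_notMem_sset hpair,
    fun k => pd_eq_zero_of_notMem_sset (hPβα k).1,
    fun k => pd_eq_zero_of_notMem_sset (hPβα k).2]
  simp

lemma reducedRawBracketG_eq (α β : Fin n → A) (i : Fin n) {N : ℕ}
    (hN : rawBracketOrdersG D g Γ α β i ⊆ range N) :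
    reducedRawBracketG D g Γ α β i =
      ((∑ v ∈ D.supp (α i), D.Dx^[v.2] (hydroP D g Γ β v.1) * D.pd v (α i))
          - ∑ v ∈ D.supp (β i), D.Dx^[v.2] (hydroP D g Γ α v.1) * D.pd v (β i))
        + (∑ k, D.frechetAdj i (α k) (hydroP D g Γ β k) N
          + ∑ l, D.frechetAdj i (hydroP D g Γ α l) (β l) N) := by
  have h0 : 0 ∈ range N := hN (mem_insert_self _ _)
  rw [reducedRawBracketG, sum_subset hN fun t _ ht => by
    rw [rawBracketCompG_eq_zero ht, D.Dx_iterate_zero, smul_zero]]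
  simp only [rawBracketCompG_eq, D.Dx_iterate_add, D.Dx_iterate_sum, smul_add, smul_sum,
    sum_add_distrib, frechetAdj]
  rw [sum_eq_single_of_mem 0 h0 fun t _ ht => by rw [if_neg ht, D.Dx_iterate_zero, smul_zero],
    sum_comm, sum_comm (s := range N)]
  simp

lemma hydroP_eq_firstOrderOp (β : Fin n → A) :
    hydroP D g Γ β = D.firstOrderOp g (D.contraGammaUx g Γ) β := by
  ext k
  simp only [hydroP, firstOrderOp, contraGammaUx, sum_add_distrib, sum_mul, mul_assoc]

lemma Dx_metric_eq (hg : ∀ i j, D.IsOrderZero (g i j)) (hg_symm : ∀ i j, g i j = g j i)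
    (hG : Matrix.of g * Matrix.of gl = 1)
    (hΓ_metric : D.IsMetricCompatible gl Γ)
    (k l : Fin n) : D.Dx (g k l) = D.contraGammaUx g Γ k l + D.contraGammaUx g Γ l k := by
  simp only [D.Dx_of_isOrderZero (hg k l), pd_metric_eq_contraGamma hg_symm hG hΓ_metric,
    contraGammaUx, ← sum_add_distrib]
  exact sum_congr rfl fun m _ => by ring

lemma sum_frechetAdj_metric_add_contraGammaUx (hg : ∀ i j, D.IsOrderZero (g i j))
    (hΓ : ∀ i j k, D.IsOrderZero (Γ i j k)) (hg_symm : ∀ i j, g i j = g j i)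
    (hG : Matrix.of g * Matrix.of gl = 1)
    (hΓ_metric : D.IsMetricCompatible gl Γ)
    (hflat : D.IsFlat g Γ)
    (i : Fin n) (α β : Fin n → A) {N : ℕ} (hN : 2 ≤ N) :
    ∑ k, ∑ l, (D.frechetAdj i (α k * D.Dx (β l)) (g k l) N
        + D.frechetAdj i (α k * β l) (D.contraGammaUx g Γ k l) N)
      = (∑ k, ∑ l, (α k * D.Dx (β l) - β k * D.Dx (α l)) * contraGamma g Γ l k i)
        - ∑ k, ∑ l, ∑ m, α k * β l *
            ((∑ s, (Γ k i s * contraGamma g Γ s l m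
                - Γ l i s * contraGamma g Γ s k m)) * D.u (m, 1)) := by
  have hterm : ∀ k l, D.frechetAdj i (α k * D.Dx (β l)) (g k l) N
        + D.frechetAdj i (α k * β l) (D.contraGammaUx g Γ k l) N
      = α k * D.Dx (β l) * contraGamma g Γ l k i - β l * D.Dx (α k) * contraGamma g Γ k l i
        - ∑ m, α k * β l * ((∑ s, (Γ k i s * contraGamma g Γ s l m
            - Γ l i s * contraGamma g Γ s k m)) * D.u (m, 1)) := by
    intro k l
    rw [frechetAdj_of_isOrderZero _ _ (hg k l) (one_le_two.trans hN),
      pd_metric_eq_contraGamma hg_symm hG hΓ_metric, contraGammaUx,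
      frechetAdj_sum_mul_u_one _ _ (isOrderZero_contraGamma hg hΓ k l) hN, D.Dx_mul]
    simp only [pd_contraGamma_sub_pd_contraGamma (mul_eq_one_comm.mp hG) hflat, neg_mul,
      sum_neg_distrib, mul_neg, mul_sum, mul_assoc]
    ring
  simp only [hterm, sum_sub_distrib, sub_mul]
  rw [sum_comm (f := fun k l => β k * D.Dx (α l) * contraGamma g Γ l k i)]

end DiffPolyAlg

open DiffPolyAlg in
theorem hydro_bracket_reduced_general {n : ℕ} {A : Type*} [CommRing A]
    [Algebra ℝ A] (D : DiffPolyAlg n A)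
    (g gl : Fin n → Fin n → A) (Γ : Fin n → Fin n → Fin n → A)
    -- `g`, its inverse `gl` and `Γ` are functions of `u = u_{(0)}` only
    (hg_fun : ∀ i j (v : Fin n × ℕ), 1 ≤ v.2 → D.pd v (g i j) = 0)
    (hΓ_fun : ∀ i j k (v : Fin n × ℕ), 1 ≤ v.2 → D.pd v (Γ i j k) = 0)
    -- `g` is symmetric and nondegenerate, with inverse (covariant) metric `gl`
    (hg_symm : ∀ i j, g i j = g j i)
    (hg_inv : ∀ i j, ∑ s, g i s * gl s j = if i = j then 1 else 0)
    -- `Γ` is the Levi-Civita connection of `g`: torsion-free and metric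
    (hΓ_metric : ∀ k i j, D.pd (k, 0) (gl i j) =
      ∑ l, (gl l j * Γ l i k + gl i l * Γ l j k))
    -- zero curvature, in contravariant form
    (hflat : ∀ i j k l,
      (∑ s, g i s * (D.pd (s, 0) (contraGamma g Γ j k l)
          - D.pd (l, 0) (contraGamma g Γ j k s)))
        - (∑ s, contraGamma g Γ i j s * contraGamma g Γ s k l)
        + (∑ s, contraGamma g Γ i k s * contraGamma g Γ s j l) = 0)
    (α β : Fin n → A) :
    ∀ i : Fin n,
      reducedRawBracketG D g Γ α β i =
        (∑ v ∈ D.supp (α i), D.Dx^[v.2] (hydroP D g Γ β v.1) * D.pd v (α i))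
          - (∑ v ∈ D.supp (β i), D.Dx^[v.2] (hydroP D g Γ α v.1) * D.pd v (β i))
          + (∑ k, ∑ l, (α k * D.Dx (β l) - β k * D.Dx (α l)) * contraGamma g Γ l k i)
          - ∑ k, ∑ l, ∑ m, α k * β l *
              ((∑ s, (Γ k i s * contraGamma g Γ s l m
                  - Γ l i s * contraGamma g Γ s k m)) * D.u (m, 1)) := by
  intro i
  have hG : Matrix.of g * Matrix.of gl = 1 := by
    ext a b
    simpa [Matrix.mul_apply, Matrix.one_apply] using hg_inv a b
  obtain ⟨N₀, hβ⟩ := D.exists_orderLT β i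
  set N := max N₀ (max ((rawBracketOrdersG D g Γ α β i).sup id) 1)
  have hON : rawBracketOrdersG D g Γ α β i ⊆ range (N + 1) :=
    (subset_range_sup_succ _).trans (range_subset_range.2 (by omega))
  rw [reducedRawBracketG_eq α β i hON, hydroP_eq_firstOrderOp α, hydroP_eq_firstOrderOp β,
    sum_frechetAdj_firstOrderOp_of_skew hg_symm (Dx_metric_eq hg_fun hg_symm hG hΓ_metric) i α β
      fun l => (hβ l).mono (le_max_left _ _),
    sum_frechetAdj_metric_add_contraGammaUx hg_fun hΓ_fun hg_symm hG hΓ_metric hflat i α β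
      (by omega), add_sub_assoc]

open DiffPolyAlg in
/-- Let `g^{ij}(u)` be a smooth nondegenerate contravariant
metric of zero curvature with Levi-Civita Christoffel symbols `Γ^i_{jk}`, and
set `Γ^{ij}_k := −g^{is}Γ^j_{sk}`. Then for reduced 1-forms `α, β ∈ 𝒜ⁿ`, the
bracket `{α,β} := Lie_{Pβ}α − Lie_{Pα}β + δ⟨β, Pα⟩` is, as a 1-form on the
formal loop space, the reduced 1-form with components
`{α,β}_i = Σ ∂_x^s(g^{kl}∂_xβ_l + Γ^{kl}_m u^m_x β_l)(∂α_i/∂u^k_{(s)})`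
`− Σ ∂_x^s(g^{kl}∂_xα_l + Γ^{kl}_m u^m_x α_l)(∂β_i/∂u^k_{(s)})`
`+ Σ (α_k ∂_x β_l − β_k ∂_x α_l) Γ^{lk}_i − Σ α_k β_l [Γ^k_{is}Γ^{sl}_m − Γ^l_{is}Γ^{sk}_m] u^m_x`. -/
theorem hydro_bracket_reduced {n : ℕ} (hn : 1 ≤ n) {A : Type*} [CommRing A]
    [Algebra ℝ A] (D : DiffPolyAlg n A)
    (g gl : Fin n → Fin n → A) (Γ : Fin n → Fin n → Fin n → A)
    -- `g`, its inverse `gl` and `Γ` are functions of `u = u_{(0)}` only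
    (hg_fun : ∀ i j (v : Fin n × ℕ), 1 ≤ v.2 → D.pd v (g i j) = 0)
    (hgl_fun : ∀ i j (v : Fin n × ℕ), 1 ≤ v.2 → D.pd v (gl i j) = 0)
    (hΓ_fun : ∀ i j k (v : Fin n × ℕ), 1 ≤ v.2 → D.pd v (Γ i j k) = 0)
    -- `g` is symmetric and nondegenerate, with inverse (covariant) metric `gl`
    (hg_symm : ∀ i j, g i j = g j i)
    (hg_inv : ∀ i j, ∑ s, g i s * gl s j = if i = j then 1 else 0)
    -- `Γ` is the Levi-Civita connection of `g`: torsion-free and metric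
    (hΓ_symm : ∀ i j k, Γ i j k = Γ i k j)
    (hΓ_metric : ∀ k i j, D.pd (k, 0) (gl i j) =
      ∑ l, (gl l j * Γ l i k + gl i l * Γ l j k))
    -- zero curvature, in contravariant form
    (hflat : ∀ i j k l,
      (∑ s, g i s * (D.pd (s, 0) (contraGamma g Γ j k l)
          - D.pd (l, 0) (contraGamma g Γ j k s)))
        - (∑ s, contraGamma g Γ i j s * contraGamma g Γ s k l)
        + (∑ s, contraGamma g Γ i k s * contraGamma g Γ s j l) = 0)
    (α β : Fin n → A) :
    ∀ i : Fin n,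
      reducedRawBracketG D g Γ α β i =
        (∑ v ∈ D.supp (α i), D.Dx^[v.2] (hydroP D g Γ β v.1) * D.pd v (α i))
          - (∑ v ∈ D.supp (β i), D.Dx^[v.2] (hydroP D g Γ α v.1) * D.pd v (β i))
          + (∑ k, ∑ l, (α k * D.Dx (β l) - β k * D.Dx (α l)) * contraGamma g Γ l k i)
          - ∑ k, ∑ l, ∑ m, α k * β l *
              ((∑ s, (Γ k i s * contraGamma g Γ s l m
                  - Γ l i s * contraGamma g Γ s k m)) * D.u (m, 1)) :=
  hydro_bracket_reduced_general D g gl Γ hg_fun hΓ_fun hg_symm hg_inv hΓ_metric hflat α β
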